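/- Let θ ∈ (0, 1/4) and 0 < ε < 1/4. Let Ψ, ψ be nonnegative continuous functions on (0,1], and let ω : [0,1] → [0,∞) be a nondecreasing function with ω(0) = 0 and ∫₀¹ ω(t)/t dt < ∞. Suppose there is C₀ > 0 such that for all r ∈ [ε, 1/2]: (i) max_{r ≤ t ≤ 2r} Ψ(t) ≤ C₀ Ψ(2r); (ii) max_{r ≤ s,t ≤ 2r} |ψ(t) − ψ(s)| ≤ C₀ Ψ(2r); (iii) Ψ(θ r) ≤ (1/2) Ψ(r) + C₀ ω(ε/r)(Ψ(2r) + ψ(2r)). Then there exists a constant C, depending only on C₀, θ, and ω, such that max_{ε ≤ r ≤ 1} (Ψ(r) + ψ(r)) ≤ C (Ψ(1) + ψ(1)). -/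
import Mathlib


open Set
open MeasureTheory

lemma dini_sum_aux (θ : ℝ) (hθ0 : 0 < θ) (hθ1 : θ < 1)
    (ω : ℝ → ℝ) (hω_nonneg : ∀ t ∈ Icc (0:ℝ) 1, 0 ≤ ω t)
    (hω_mono : ∀ s ∈ Icc (0:ℝ) 1, ∀ t ∈ Icc (0:ℝ) 1, s ≤ t → ω s ≤ ω t)
    (hω_dini : MeasureTheory.IntegrableOn (fun t => ω t / t) (Ioc (0:ℝ) 1)) (K : ℕ) :
    ∑ k ∈ Finset.range K, ω (θ^(k+1)) ≤ (∫ u in Ioc (0:ℝ) 1, ω u / u) / Real.log (1/θ) := by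
  have hlog : 0 < Real.log (1/θ) := Real.log_pos (by rw [lt_div_iff₀ hθ0]; linarith)
  have hpowpos : ∀ k : ℕ, 0 < θ^k := fun k => pow_pos hθ0 k
  have hpowle1 : ∀ k : ℕ, θ^k ≤ 1 := fun k => pow_le_one₀ hθ0.le hθ1.le
  have hpowmono : ∀ k : ℕ, θ^(k+1) ≤ θ^k := fun k =>
    pow_le_pow_of_le_one hθ0.le hθ1.le (Nat.le_succ k)
  have hsub : ∀ k : ℕ, Ioc (θ^(k+1)) (θ^k) ⊆ Ioc (0:ℝ) 1 := fun k =>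
    Ioc_subset_Ioc (hpowpos (k+1)).le (hpowle1 k)
  have hint : ∀ k : ℕ, IntegrableOn (fun u => ω u / u) (Ioc (θ^(k+1)) (θ^k)) :=
    fun k => hω_dini.mono_set (hsub k)
  -- Step A
  have stepA : ∀ k : ℕ, ω (θ^(k+1)) * Real.log (1/θ) ≤
      ∫ u in Ioc (θ^(k+1)) (θ^k), ω u / u := by
    intro k
    have hmem : θ^(k+1) ∈ Icc (0:ℝ) 1 := ⟨(hpowpos (k+1)).le, hpowle1 (k+1)⟩
    have hconst : ∫ u in Ioc (θ^(k+1)) (θ^k), ω (θ^(k+1)) * u⁻¹ =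
        ω (θ^(k+1)) * Real.log (1/θ) := by
      have hrat : θ^k / θ^(k+1) = 1/θ := by
        rw [pow_succ]
        rw [div_mul_eq_div_div, div_self (ne_of_gt (hpowpos k))]
      rw [MeasureTheory.integral_const_mul]
      rw [← intervalIntegral.integral_of_le (hpowmono k),
        integral_inv_of_pos (hpowpos (k+1)) (hpowpos k), hrat]
    have hconst_int : IntegrableOn (fun u => ω (θ^(k+1)) * u⁻¹) (Ioc (θ^(k+1)) (θ^k)) := by
      apply IntegrableOn.mono_set _ (Ioc_subset_Icc_self)
      apply ContinuousOn.integrableOn_Icc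
      apply ContinuousOn.mul continuousOn_const
      apply ContinuousOn.inv₀ continuousOn_id
      intro x hx
      exact ne_of_gt (lt_of_lt_of_le (hpowpos (k+1)) hx.1)
    calc ω (θ^(k+1)) * Real.log (1/θ)
        = ∫ u in Ioc (θ^(k+1)) (θ^k), ω (θ^(k+1)) * u⁻¹ := hconst.symm
      _ ≤ ∫ u in Ioc (θ^(k+1)) (θ^k), ω u / u := by
          apply MeasureTheory.setIntegral_mono_on hconst_int (hint k) measurableSet_Ioc
          intro u hu
          have hu0 : 0 < u := lt_of_lt_of_le (hpowpos (k+1)) hu.1.le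
          have hωle : ω (θ^(k+1)) ≤ ω u :=
            hω_mono _ hmem u ⟨hu0.le, le_trans hu.2 (hpowle1 k)⟩ hu.1.le
          rw [div_eq_mul_inv]
          exact mul_le_mul_of_nonneg_right hωle (inv_nonneg.mpr hu0.le)
  -- Step B : telescoping
  have stepB : ∀ K : ℕ, ∑ k ∈ Finset.range K, (∫ u in Ioc (θ^(k+1)) (θ^k), ω u / u) =
      ∫ u in Ioc (θ^K) 1, ω u / u := by
    intro K
    induction K with
    | zero => simp [Set.Ioc_self]
    | succ K ih =>
      rw [Finset.sum_range_succ, ih, add_comm]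
      have hd : Disjoint (Ioc (θ^(K+1)) (θ^K)) (Ioc (θ^K) (1:ℝ)) := by
        rw [Set.Ioc_disjoint_Ioc]
        exact le_trans (min_le_left _ _) (le_max_right _ _)
      rw [← MeasureTheory.setIntegral_union hd measurableSet_Ioc (hint K)
        (hω_dini.mono_set (Ioc_subset_Ioc (hpowpos K).le le_rfl))]
      rw [Set.Ioc_union_Ioc_eq_Ioc (hpowmono K) (hpowle1 K)]
  have hI : (∫ u in Ioc (θ^K) 1, ω u / u) ≤ ∫ u in Ioc (0:ℝ) 1, ω u / u := by
    apply MeasureTheory.setIntegral_mono_set hω_dini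
    · apply (MeasureTheory.ae_restrict_iff' measurableSet_Ioc).mpr
      exact Filter.Eventually.of_forall fun x hx => div_nonneg (hω_nonneg x ⟨hx.1.le, hx.2⟩) hx.1.le
    · exact (Ioc_subset_Ioc (hpowpos K).le le_rfl).eventuallyLE
  rw [le_div_iff₀ hlog, Finset.sum_mul]
  calc ∑ k ∈ Finset.range K, ω (θ^(k+1)) * Real.log (1/θ)
      ≤ ∑ k ∈ Finset.range K, ∫ u in Ioc (θ^(k+1)) (θ^k), ω u / u :=
        Finset.sum_le_sum fun k _ => stepA k
    _ = ∫ u in Ioc (θ^K) 1, ω u / u := stepB K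
    _ ≤ _ := hI

lemma jump_aux (C₁ : ℝ) (hC₁ : 1 ≤ C₁) (ε : ℝ) (hε : 0 < ε)
    (Ψ ψ : ℝ → ℝ)
    (hΨnn : ∀ t, ε ≤ t → t ≤ 1 → 0 ≤ Ψ t)
    (hstep : ∀ s u, ε ≤ s → s ≤ u → u ≤ 2*s → 2*ε ≤ u → u ≤ 1 →
      Ψ s ≤ C₁ * Ψ u ∧ ψ s ≤ ψ u + C₁ * Ψ u) :
    ∀ K : ℕ, ∀ s T, ε ≤ s → s ≤ T → T ≤ 1 → 2*ε ≤ T → T ≤ 2^K * s →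
      Ψ s ≤ C₁^K * Ψ T ∧ ψ s ≤ ψ T + K * C₁^(K+1) * Ψ T := by
  intro K
  induction K with
  | zero =>
    intro s T h1 h2 h3 h4 h5
    have hsT : s = T := le_antisymm h2 (by simpa using h5)
    subst hsT
    simp
  | succ K ih =>
    intro s T h1 h2 h3 h4 h5
    have hΨT : 0 ≤ Ψ T := hΨnn T (le_trans h1 h2) h3
    have hC₁0 : (0:ℝ) ≤ C₁ := le_trans zero_le_one hC₁
    have hpow : C₁^K ≤ C₁^(K+1) := pow_le_pow_right₀ hC₁ (Nat.le_succ K)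
    have hpow2 : C₁^(K+1) ≤ C₁^(K+2) := pow_le_pow_right₀ hC₁ (by omega)
    by_cases hT : T ≤ 2^K * s
    · obtain ⟨hΨ, hψ⟩ := ih s T h1 h2 h3 h4 hT
      constructor
      · exact le_trans hΨ (mul_le_mul_of_nonneg_right hpow hΨT)
      · refine le_trans hψ ?_
        have : (K:ℝ) * C₁^(K+1) * Ψ T ≤ (K+1) * C₁^(K+2) * Ψ T := by
          apply mul_le_mul_of_nonneg_right _ hΨT
          apply mul_le_mul (by linarith) hpow2 (by positivity) (by linarith)
        push_cast
        push_cast at hψ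
        linarith
    · push_neg at hT
      set u := min (2*s) T with hu
      have hs0 : 0 < s := lt_of_lt_of_le hε h1
      have hsu : s ≤ u := le_min (by linarith) h2
      have hu2s : u ≤ 2*s := min_le_left _ _
      have huT : u ≤ T := min_le_right _ _
      have h2eu : 2*ε ≤ u := le_min (by linarith) h4
      have hu1 : u ≤ 1 := le_trans huT h3
      obtain ⟨hΨ1, hψ1⟩ := hstep s u h1 hsu hu2s h2eu hu1
      have hTu : T ≤ 2^K * u := by
        rcases le_total (2*s) T with h | h
        · have : u = 2*s := min_eq_left h
          rw [this]
          calc T ≤ 2^(K+1) * s := h5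
            _ = 2^K * (2*s) := by ring
        · have : u = T := min_eq_right h
          rw [this]
          have hT0 : (0:ℝ) ≤ T := by linarith
          have h2K : (1:ℝ) ≤ 2^K := one_le_pow₀ one_le_two
          nlinarith
      obtain ⟨hΨ2, hψ2⟩ := ih u T (le_trans h1 hsu) huT h3 h4 hTu
      constructor
      · calc Ψ s ≤ C₁ * Ψ u := hΨ1
          _ ≤ C₁ * (C₁^K * Ψ T) := mul_le_mul_of_nonneg_left hΨ2 hC₁0
          _ = C₁^(K+1) * Ψ T := by ring
      · have hΨu : Ψ u ≤ C₁^K * Ψ T := hΨ2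
        have h₁ : ψ s ≤ ψ u + C₁ * Ψ u := hψ1
        have hCK : C₁ * Ψ u ≤ C₁^(K+1) * Ψ T := by
          calc C₁ * Ψ u ≤ C₁ * (C₁^K * Ψ T) := mul_le_mul_of_nonneg_left hΨ2 hC₁0
            _ = C₁^(K+1) * Ψ T := by ring
        have h₂ : ψ u ≤ ψ T + K * C₁^(K+1) * Ψ T := hψ2
        have hK2 : (K:ℝ) * C₁^(K+1) * Ψ T + C₁^(K+1) * Ψ T ≤ ((K:ℝ)+1) * C₁^(K+2) * Ψ T := by
          have : ((K:ℝ)+1) * C₁^(K+1) * Ψ T ≤ ((K:ℝ)+1) * C₁^(K+2) * Ψ T := by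
            apply mul_le_mul_of_nonneg_right _ hΨT
            apply mul_le_mul_of_nonneg_left hpow2 (by positivity)
          linarith
        push_cast
        linarith

set_option maxHeartbeats 1000000 in

/-- Campanato-type iteration lemma (Lemma 5.3). The constant `C` depends only on
`C₀`, `θ` and `ω`; in particular it does not depend on `ε`, `Ψ`, `ψ`. -/
theorem campanato_iteration
    (θ : ℝ) (hθ : θ ∈ Ioo (0:ℝ) (1/4)) (C₀ : ℝ) (hC₀ : 0 < C₀)
    (ω : ℝ → ℝ) (hω_nonneg : ∀ t ∈ Icc (0:ℝ) 1, 0 ≤ ω t)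
    (hω_mono : ∀ s ∈ Icc (0:ℝ) 1, ∀ t ∈ Icc (0:ℝ) 1, s ≤ t → ω s ≤ ω t)
    (hω0 : ω 0 = 0)
    (hω_dini : MeasureTheory.IntegrableOn (fun t => ω t / t) (Ioc (0:ℝ) 1)) :
    ∃ C : ℝ, 0 < C ∧
      ∀ (ε : ℝ), 0 < ε → ε < 1/4 →
      ∀ (Ψ ψ : ℝ → ℝ),
        ContinuousOn Ψ (Ioc (0:ℝ) 1) → ContinuousOn ψ (Ioc (0:ℝ) 1) →
        (∀ r ∈ Ioc (0:ℝ) 1, 0 ≤ Ψ r) → (∀ r ∈ Ioc (0:ℝ) 1, 0 ≤ ψ r) →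
        (∀ r ∈ Icc ε (1/2 : ℝ), ∀ t ∈ Icc r (2*r), Ψ t ≤ C₀ * Ψ (2*r)) →
        (∀ r ∈ Icc ε (1/2 : ℝ), ∀ s ∈ Icc r (2*r), ∀ t ∈ Icc r (2*r),
            |ψ t - ψ s| ≤ C₀ * Ψ (2*r)) →
        (∀ r ∈ Icc ε (1/2 : ℝ),
            Ψ (θ * r) ≤ (1/2) * Ψ r + C₀ * ω (ε / r) * (Ψ (2*r) + ψ (2*r))) →
        ∀ r ∈ Icc ε (1:ℝ), Ψ r + ψ r ≤ C * (Ψ 1 + ψ 1) := by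
  obtain ⟨hθ0, hθ4⟩ := hθ
  have hθ1 : θ < 1 := by linarith
  -- a power of two dominating 1/θ
  obtain ⟨p, hp⟩ : ∃ p : ℕ, 1/θ < 2^p := by
    obtain ⟨p, hp⟩ := exists_pow_lt_of_lt_one hθ0 (by norm_num : (1:ℝ)/2 < 1)
    refine ⟨p, ?_⟩
    have h2p : (0:ℝ) < 2^p := by positivity
    rw [one_div_pow, div_lt_iff₀ h2p] at hp
    rw [div_lt_iff₀ hθ0]
    linarith
  have h2pθ : 1 < 2^p * θ := by
    rw [div_lt_iff₀ hθ0] at hp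
    linarith
  -- opaque constants
  obtain ⟨C₁, hC₁1, hC₀C₁⟩ : ∃ x : ℝ, 1 ≤ x ∧ C₀ ≤ x :=
    ⟨max C₀ 1, le_max_right _ _, le_max_left _ _⟩
  have hC₁0 : (0:ℝ) < C₁ := by linarith
  have hC₁p : (0:ℝ) ≤ C₁^p := pow_nonneg hC₁0.le p
  have hC₉0 : (0:ℝ) ≤ (p:ℝ) * C₁^(p+1) :=
    mul_nonneg (Nat.cast_nonneg p) (pow_nonneg hC₁0.le _)
  obtain ⟨c, hcdef⟩ : ∃ x : ℝ, x = C₁ * (1 + C₁^p + 2*((p:ℝ)*C₁^(p+1))) := ⟨_, rfl⟩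
  have hc0 : 0 ≤ c := by rw [hcdef]; positivity
  obtain ⟨D, hD⟩ : ∃ D : ℝ, ∀ K : ℕ,
      (∑ k ∈ Finset.range K, ω (θ^(k+1))) ≤ D :=
    ⟨_, fun K => dini_sum_aux θ hθ0 hθ1 ω hω_nonneg hω_mono hω_dini K⟩
  obtain ⟨E, hE0, hEmono⟩ : ∃ E : ℝ, 0 < E ∧
      ∀ x : ℝ, x ≤ 2*c*(ω 1 + D) → Real.exp x ≤ E :=
    ⟨Real.exp (2*c*(ω 1 + D)), Real.exp_pos _, fun x hx => Real.exp_le_exp.mpr hx⟩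
  obtain ⟨Cf, hCfdef⟩ : ∃ x : ℝ,
      x = C₁^(2*p) + ((2*p : ℕ):ℝ)*C₁^(2*p+1) + (p:ℝ)*C₁^(p+1) := ⟨_, rfl⟩
  have hCf0 : 0 ≤ Cf := by rw [hCfdef]; positivity
  obtain ⟨C, hCdef⟩ : ∃ x : ℝ,
      x = 1 + C₁^p + (p:ℝ)*C₁^(p+1) + Cf*(2+2*C₁^p)*E := ⟨_, rfl⟩
  have hC0 : 0 < C := by
    have n5 : 0 ≤ Cf*(2+2*C₁^p)*E :=
      mul_nonneg (mul_nonneg hCf0 (by linarith)) hE0.le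
    rw [hCdef]; linarith
  refine ⟨C, hC0, ?_⟩
  intro ε hε0 hε4 Ψ ψ hΨc hψc hΨ0 hψ0 h1 h2 h3 r hr
  clear hΨc hψc hω_dini hω0
  have hΨ1nn : 0 ≤ Ψ 1 := hΨ0 1 ⟨one_pos, le_rfl⟩
  have hψ1nn : 0 ≤ ψ 1 := hψ0 1 ⟨one_pos, le_rfl⟩
  obtain ⟨M, hMdef⟩ : ∃ x : ℝ, x = Ψ 1 + ψ 1 := ⟨_, rfl⟩
  rw [← hMdef]
  have hM : 0 ≤ M := by rw [hMdef]; linarith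
  have hΨ1M : Ψ 1 ≤ M := by rw [hMdef]; linarith
  have hψ1M : ψ 1 ≤ M := by rw [hMdef]; linarith
  have hΨnn : ∀ t, ε ≤ t → t ≤ 1 → 0 ≤ Ψ t :=
    fun t ht h1' => hΨ0 t ⟨lt_of_lt_of_le hε0 ht, h1'⟩
  have hψnn : ∀ t, ε ≤ t → t ≤ 1 → 0 ≤ ψ t :=
    fun t ht h1' => hψ0 t ⟨lt_of_lt_of_le hε0 ht, h1'⟩
  -- one-step doubling estimate
  have hstep : ∀ s u, ε ≤ s → s ≤ u → u ≤ 2*s → 2*ε ≤ u → u ≤ 1 →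
      Ψ s ≤ C₁ * Ψ u ∧ ψ s ≤ ψ u + C₁ * Ψ u := by
    intro s u hes hsu hu2s h2eu hu1
    have hru : u/2 ∈ Icc ε (1/2:ℝ) := ⟨by linarith, by linarith⟩
    have h2u : 2*(u/2) = u := by ring
    have hsmem : s ∈ Icc (u/2) (2*(u/2)) := by
      refine ⟨by linarith, ?_⟩
      rw [h2u]; linarith
    have humem : u ∈ Icc (u/2) (2*(u/2)) := ⟨by linarith, by rw [h2u]⟩
    have hΨu : 0 ≤ Ψ u := hΨnn u (by linarith) hu1
    have hΨs := h1 (u/2) hru s hsmem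
    rw [h2u] at hΨs
    have hosc := h2 (u/2) hru u humem s hsmem
    rw [h2u] at hosc
    have hosc' : ψ s - ψ u ≤ C₀ * Ψ u := le_trans (le_abs_self _) hosc
    have hCC : C₀ * Ψ u ≤ C₁ * Ψ u := mul_le_mul_of_nonneg_right hC₀C₁ hΨu
    exact ⟨le_trans hΨs hCC, by linarith⟩
  have JUMP := jump_aux C₁ hC₁1 ε hε0 Ψ ψ hΨnn hstep
  by_cases hcase : θ < ε
  · -- easy case : bounded number of scales
    have hfuel : (1:ℝ) ≤ 2^p * r := by
      have h2p : (0:ℝ) < 2^p := by positivity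
      nlinarith [hr.1]
    obtain ⟨hΨr, hψr⟩ := JUMP p r 1 hr.1 hr.2 le_rfl (by linarith) hfuel
    have e1 : C₁^p * Ψ 1 ≤ C₁^p * M := mul_le_mul_of_nonneg_left hΨ1M hC₁p
    have e2 : (p:ℝ) * C₁^(p+1) * Ψ 1 ≤ (p:ℝ) * C₁^(p+1) * M :=
      mul_le_mul_of_nonneg_left hΨ1M hC₉0
    have n5 : 0 ≤ Cf*(2+2*C₁^p)*E :=
      mul_nonneg (mul_nonneg hCf0 (by linarith)) hE0.le
    have hexp : C * M = M + C₁^p*M + ((p:ℝ)*C₁^(p+1))*M + (Cf*(2+2*C₁^p)*E)*M := by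
      rw [hCdef]; ring
    have n6 : 0 ≤ (Cf*(2+2*C₁^p)*E)*M := mul_nonneg n5 hM
    linarith only [hΨr, hψr, e1, e2, hexp, n6, hψ1M, hM]
  · -- main case : ε ≤ θ
    push_neg at hcase
    have hpow0 : ∀ j:ℕ, 0 < θ^j := fun j => pow_pos hθ0 j
    have hpowle1 : ∀ j:ℕ, θ^j ≤ 1 := fun j => pow_le_one₀ hθ0.le hθ1.le
    have hpowanti : ∀ i j:ℕ, i ≤ j → θ^j ≤ θ^i :=
      fun i j h => pow_le_pow_of_le_one hθ0.le hθ1.le h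
    have hΨθ : ∀ i:ℕ, 0 ≤ Ψ (θ^i) := fun i => hΨ0 _ ⟨hpow0 i, hpowle1 i⟩
    have hψθ : ∀ i:ℕ, 0 ≤ ψ (θ^i) := fun i => hψ0 _ ⟨hpow0 i, hpowle1 i⟩
    -- the bottom scale index N
    have hex : ∃ n:ℕ, θ^n < ε := exists_pow_lt_of_lt_one hε0 hθ1
    have hfind2 : 1 < Nat.find hex := by
      refine (Nat.lt_find_iff hex 1).mpr ?_
      intro m hm
      interval_cases m
      · rw [pow_zero]; push_neg; linarith
      · rw [pow_one]; push_neg; exact hcase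
    obtain ⟨N₀, hN₀⟩ : ∃ N₀:ℕ, Nat.find hex = N₀ + 2 := ⟨Nat.find hex - 2, by omega⟩
    obtain ⟨N, hNdef⟩ : ∃ N:ℕ, N = N₀ + 1 := ⟨_, rfl⟩
    have hN1 : 1 ≤ N := by omega
    have hθN : ε ≤ θ^N := by
      have hmin := Nat.find_min hex (m := N) (by omega)
      linarith [not_lt.mp hmin]
    have hθN1 : θ^(N+1) < ε := by
      have hs := Nat.find_spec hex
      rw [hN₀] at hs
      have he : N + 1 = N₀ + 2 := by omega
      rw [he]; exact hs
    have hεpow : ∀ j:ℕ, j ≤ N → ε ≤ θ^j := fun j hj => le_trans hθN (hpowanti j N hj)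
    -- sum helpers
    have hsum_mono : ∀ a b:ℕ, a ≤ b →
        (∑ i ∈ Finset.range a, Ψ (θ^i)) ≤ ∑ i ∈ Finset.range b, Ψ (θ^i) :=
      fun a b hab => Finset.sum_le_sum_of_subset_of_nonneg
        (Finset.range_subset_range.mpr hab) (fun i _ _ => hΨθ i)
    have hsum_nn : ∀ a:ℕ, 0 ≤ ∑ i ∈ Finset.range a, Ψ (θ^i) :=
      fun a => Finset.sum_nonneg fun i _ => hΨθ i
    have hterm_le : ∀ i a:ℕ, i < a → Ψ (θ^i) ≤ ∑ j ∈ Finset.range a, Ψ (θ^j) :=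
      fun i a hia => Finset.single_le_sum (fun j _ => hΨθ j) (Finset.mem_range.mpr hia)
    -- gap estimates
    have h2εj : ∀ j:ℕ, ε ≤ θ^(j+1) → 2*ε ≤ θ^j := by
      intro j hj
      have hs : θ^(j+1) = θ^j*θ := pow_succ θ j
      have hint : 0 ≤ θ^j*(1/4 - θ) :=
        mul_nonneg (hpow0 j).le (by linarith)
      rw [hs] at hj
      linarith only [hj, hint, (hpow0 j).le]
    have hfuel1 : ∀ j:ℕ, θ^j ≤ 2^p*θ^(j+1) := by
      intro j
      have hs : θ^(j+1) = θ^j*θ := pow_succ θ j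
      have hint : 0 ≤ θ^j*(2^p*θ - 1) := mul_nonneg (hpow0 j).le (by linarith)
      rw [hs]
      linarith only [hint]
    -- oscillation chain bound
    have CH : ∀ j:ℕ, j ≤ N →
        ψ (θ^j) ≤ ψ 1 + ((p:ℝ)*C₁^(p+1)) * ∑ i ∈ Finset.range j, Ψ (θ^i) := by
      intro j
      induction j with
      | zero => intro _; simp
      | succ j ihj =>
        intro hjN
        obtain ⟨_, hψj⟩ := JUMP p (θ^(j+1)) (θ^j) (hεpow _ hjN)
          (hpowanti j (j+1) (Nat.le_succ j)) (hpowle1 j)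
          (h2εj j (hεpow _ hjN)) (hfuel1 j)
        have hih := ihj (by omega)
        have hsplit : ((p:ℝ)*C₁^(p+1)) * (∑ i ∈ Finset.range (j+1), Ψ (θ^i)) =
            ((p:ℝ)*C₁^(p+1)) * (∑ i ∈ Finset.range j, Ψ (θ^i))
            + ((p:ℝ)*C₁^(p+1)) * Ψ (θ^j) := by
          rw [Finset.sum_range_succ]; ring
        linarith only [hψj, hih, hsplit]
    -- main recursion (Gronwall step)
    have GR : ∀ k:ℕ, k+1 ≤ N →
        M + (∑ i ∈ Finset.range (k+3), Ψ (θ^i)) + Ψ (θ^(k+2)) ≤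
        (1 + 2*c*ω (ε/θ^(k+1))) *
          (M + (∑ i ∈ Finset.range (k+2), Ψ (θ^i)) + Ψ (θ^(k+1))) := by
      intro k hk
      have hεk1 : ε ≤ θ^(k+1) := hεpow _ hk
      have hθk12 : θ^(k+1) ≤ 1/2 := by
        have h' : θ^(k+1) ≤ θ^1 := hpowanti 1 (k+1) (by omega)
        rw [pow_one] at h'; linarith
      have hr3 := h3 (θ^(k+1)) ⟨hεk1, hθk12⟩
      have hps : θ * θ^(k+1) = θ^(k+2) := by ring
      rw [hps] at hr3
      have h2k : ε ≤ 2*θ^(k+1) := by linarith [(hpow0 (k+1)).le]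
      have h2kk : 2*θ^(k+1) ≤ θ^k := by
        have hs : θ^(k+1) = θ^k*θ := pow_succ θ k
        have hint : 0 ≤ θ^k*(1 - 2*θ) := mul_nonneg (hpow0 k).le (by linarith)
        rw [hs]
        linarith only [hint]
      have h2ek : 2*ε ≤ θ^k := h2εj k hεk1
      have hfuelk : θ^k ≤ 2^p * (2*θ^(k+1)) := by
        have hs : θ^(k+1) = θ^k*θ := pow_succ θ k
        have hint : 0 ≤ θ^k*(2^p*θ - 1) := mul_nonneg (hpow0 k).le (by linarith)
        have hint2 : 0 ≤ θ^k*(2^p*θ) := by positivity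
        rw [hs]
        linarith only [hint, hint2]
      obtain ⟨hΨ2, hψ2⟩ := JUMP p (2*θ^(k+1)) (θ^k) h2k h2kk (hpowle1 k) h2ek hfuelk
      have hCHk := CH k (by omega)
      have hωj0 : 0 ≤ ω (ε/θ^(k+1)) :=
        hω_nonneg _ ⟨div_nonneg hε0.le (hpow0 _).le, (div_le_one (hpow0 _)).mpr hεk1⟩
      -- bound the bracket
      have e4 : (∑ i ∈ Finset.range k, Ψ (θ^i)) ≤ ∑ i ∈ Finset.range (k+2), Ψ (θ^i) :=
        hsum_mono k (k+2) (by omega)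
      have e5 : Ψ (θ^k) ≤ ∑ i ∈ Finset.range (k+2), Ψ (θ^i) := hterm_le k (k+2) (by omega)
      have hSknn : 0 ≤ ∑ i ∈ Finset.range (k+2), Ψ (θ^i) := hsum_nn _
      have m1 : C₁^p * Ψ (θ^k) ≤ C₁^p * ∑ i ∈ Finset.range (k+2), Ψ (θ^i) :=
        mul_le_mul_of_nonneg_left e5 hC₁p
      have m2 : ((p:ℝ)*C₁^(p+1)) * Ψ (θ^k) ≤
          ((p:ℝ)*C₁^(p+1)) * ∑ i ∈ Finset.range (k+2), Ψ (θ^i) :=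
        mul_le_mul_of_nonneg_left e5 hC₉0
      have m3 : ((p:ℝ)*C₁^(p+1)) * (∑ i ∈ Finset.range k, Ψ (θ^i)) ≤
          ((p:ℝ)*C₁^(p+1)) * ∑ i ∈ Finset.range (k+2), Ψ (θ^i) :=
        mul_le_mul_of_nonneg_left e4 hC₉0
      have hM1 : 0 ≤ C₁^p * M := mul_nonneg hC₁p hM
      have hM2 : 0 ≤ ((p:ℝ)*C₁^(p+1))*M := mul_nonneg hC₉0 hM
      have hbr : Ψ (2*θ^(k+1)) + ψ (2*θ^(k+1)) ≤
          (1 + C₁^p + 2*((p:ℝ)*C₁^(p+1))) *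
            (M + ∑ i ∈ Finset.range (k+2), Ψ (θ^i)) := by
        have hexp : (1 + C₁^p + 2*((p:ℝ)*C₁^(p+1))) *
            (M + ∑ i ∈ Finset.range (k+2), Ψ (θ^i)) =
            M + (∑ i ∈ Finset.range (k+2), Ψ (θ^i)) + C₁^p*M
            + C₁^p*(∑ i ∈ Finset.range (k+2), Ψ (θ^i))
            + 2*(((p:ℝ)*C₁^(p+1))*M)
            + 2*(((p:ℝ)*C₁^(p+1))*(∑ i ∈ Finset.range (k+2), Ψ (θ^i))) := by ring
        linarith only [hΨ2, hψ2, hCHk, m1, m2, m3, hexp, hM1, hM2, hSknn, hψ1M]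
      -- the recursion inequality
      have hX0 : 0 ≤ Ψ (2*θ^(k+1)) + ψ (2*θ^(k+1)) :=
        add_nonneg (hΨnn _ h2k (le_trans h2kk (hpowle1 k)))
          (hψnn _ h2k (le_trans h2kk (hpowle1 k)))
      have s1 : C₀ * ω (ε/θ^(k+1)) * (Ψ (2*θ^(k+1)) + ψ (2*θ^(k+1))) ≤
          C₁ * ω (ε/θ^(k+1)) * (Ψ (2*θ^(k+1)) + ψ (2*θ^(k+1))) :=
        mul_le_mul_of_nonneg_right (mul_le_mul_of_nonneg_right hC₀C₁ hωj0) hX0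
      have s2 : C₁ * ω (ε/θ^(k+1)) * (Ψ (2*θ^(k+1)) + ψ (2*θ^(k+1))) ≤
          C₁ * ω (ε/θ^(k+1)) * ((1 + C₁^p + 2*((p:ℝ)*C₁^(p+1))) *
            (M + ∑ i ∈ Finset.range (k+2), Ψ (θ^i))) :=
        mul_le_mul_of_nonneg_left hbr (mul_nonneg hC₁0.le hωj0)
      have hsplit : (∑ i ∈ Finset.range (k+3), Ψ (θ^i)) =
          (∑ i ∈ Finset.range (k+2), Ψ (θ^i)) + Ψ (θ^(k+2)) := Finset.sum_range_succ _ (k+2)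
      have n1 : 0 ≤ (c * ω (ε/θ^(k+1))) * Ψ (θ^(k+1)) :=
        mul_nonneg (mul_nonneg hc0 hωj0) (hΨθ (k+1))
      have hceq : c * ω (ε/θ^(k+1)) * (M + ∑ i ∈ Finset.range (k+2), Ψ (θ^i)) =
          C₁ * ω (ε/θ^(k+1)) * ((1 + C₁^p + 2*((p:ℝ)*C₁^(p+1))) *
            (M + ∑ i ∈ Finset.range (k+2), Ψ (θ^i))) := by
        rw [hcdef]; ring
      -- combine
      have hgoalexp : (1 + 2*c*ω (ε/θ^(k+1))) *
          (M + (∑ i ∈ Finset.range (k+2), Ψ (θ^i)) + Ψ (θ^(k+1))) =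
          M + (∑ i ∈ Finset.range (k+2), Ψ (θ^i)) + Ψ (θ^(k+1))
          + 2*(c * ω (ε/θ^(k+1)) * (M + ∑ i ∈ Finset.range (k+2), Ψ (θ^i)))
          + 2*((c * ω (ε/θ^(k+1))) * Ψ (θ^(k+1))) := by ring
      linarith only [hr3, s1, s2, hsplit, n1, hceq, hgoalexp]
    -- iterated Gronwall bound
    have GB : ∀ m:ℕ, m ≤ N →
        M + (∑ i ∈ Finset.range (m+2), Ψ (θ^i)) + Ψ (θ^(m+1)) ≤
        (M + (∑ i ∈ Finset.range 2, Ψ (θ^i)) + Ψ (θ^1)) *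
          Real.exp (2*c* ∑ i ∈ Finset.range m, ω (ε/θ^(i+1))) := by
      intro m
      induction m with
      | zero =>
        intro _
        simp only [Finset.range_zero, Finset.sum_empty, mul_zero, Real.exp_zero, mul_one]
        exact le_rfl
      | succ m ihm =>
        intro hm
        have ih := ihm (by omega)
        have hGR := GR m hm
        have hVnn : 0 ≤ M + (∑ i ∈ Finset.range (m+2), Ψ (θ^i)) + Ψ (θ^(m+1)) :=
          add_nonneg (add_nonneg hM (hsum_nn _)) (hΨθ _)
        have hωm0 : 0 ≤ ω (ε/θ^(m+1)) :=
          hω_nonneg _ ⟨div_nonneg hε0.le (hpow0 _).le,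
            (div_le_one (hpow0 _)).mpr (hεpow _ hm)⟩
        have hexp := Real.add_one_le_exp (2*c*ω (ε/θ^(m+1)))
        have step2 : (1 + 2*c*ω (ε/θ^(m+1))) ≤ Real.exp (2*c*ω (ε/θ^(m+1))) := by
          linarith
        have step3 : M + (∑ i ∈ Finset.range (m+3), Ψ (θ^i)) + Ψ (θ^(m+2)) ≤
            Real.exp (2*c*ω (ε/θ^(m+1))) *
              (M + (∑ i ∈ Finset.range (m+2), Ψ (θ^i)) + Ψ (θ^(m+1))) :=
          le_trans hGR (mul_le_mul_of_nonneg_right step2 hVnn)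
        have step4 : Real.exp (2*c*ω (ε/θ^(m+1))) *
              (M + (∑ i ∈ Finset.range (m+2), Ψ (θ^i)) + Ψ (θ^(m+1))) ≤
            Real.exp (2*c*ω (ε/θ^(m+1))) *
              ((M + (∑ i ∈ Finset.range 2, Ψ (θ^i)) + Ψ (θ^1)) *
                Real.exp (2*c* ∑ i ∈ Finset.range m, ω (ε/θ^(i+1)))) :=
          mul_le_mul_of_nonneg_left ih (Real.exp_pos _).le
        have step5 : Real.exp (2*c*ω (ε/θ^(m+1))) *
              ((M + (∑ i ∈ Finset.range 2, Ψ (θ^i)) + Ψ (θ^1)) *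
                Real.exp (2*c* ∑ i ∈ Finset.range m, ω (ε/θ^(i+1)))) =
            (M + (∑ i ∈ Finset.range 2, Ψ (θ^i)) + Ψ (θ^1)) *
              Real.exp (2*c* ∑ i ∈ Finset.range (m+1), ω (ε/θ^(i+1))) := by
          have hsum : (∑ i ∈ Finset.range (m+1), ω (ε/θ^(i+1))) =
              (∑ i ∈ Finset.range m, ω (ε/θ^(i+1))) + ω (ε/θ^(m+1)) :=
            Finset.sum_range_succ _ m
          rw [hsum, mul_add, Real.exp_add]
          ring
        calc M + (∑ i ∈ Finset.range (m+1+2), Ψ (θ^i)) + Ψ (θ^(m+1+1)) ≤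
            Real.exp (2*c*ω (ε/θ^(m+1))) *
              (M + (∑ i ∈ Finset.range (m+2), Ψ (θ^i)) + Ψ (θ^(m+1))) := step3
          _ ≤ _ := step4
          _ = _ := step5
    -- bound on the ω-sums
    have WB : ∀ m:ℕ, m ≤ N → (∑ i ∈ Finset.range m, ω (ε/θ^(i+1))) ≤ ω 1 + D := by
      intro m hm
      have t1 : ∀ i ∈ Finset.range m, ω (ε/θ^(i+1)) ≤ ω (θ^(N-(i+1))) := by
        intro i hi
        have hiN : i+1 ≤ N := by
          have := Finset.mem_range.mp hi; omega
        have harg : ε/θ^(i+1) ≤ θ^(N-(i+1)) := by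
          rw [div_le_iff₀ (hpow0 (i+1))]
          calc ε ≤ θ^N := hθN
            _ = θ^(N-(i+1)) * θ^(i+1) := by rw [← pow_add]; congr 1; omega
        exact hω_mono _ ⟨div_nonneg hε0.le (hpow0 _).le, le_trans harg (hpowle1 _)⟩
          _ ⟨(hpow0 _).le, hpowle1 _⟩ harg
      have t2 := Finset.sum_le_sum t1
      have hinj : ∀ x ∈ Finset.range m, ∀ y ∈ Finset.range m,
          N-(x+1) = N-(y+1) → x = y := by
        intro x hx y hy hxy
        have hx' := Finset.mem_range.mp hx
        have hy' := Finset.mem_range.mp hy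
        omega
      have t3 : (∑ i ∈ Finset.range m, ω (θ^(N-(i+1)))) =
          ∑ k ∈ (Finset.range m).image (fun i => N-(i+1)), ω (θ^k) :=
        (Finset.sum_image (f := fun k => ω (θ^k)) (g := fun i => N - (i+1)) hinj).symm
      have t4 : (Finset.range m).image (fun i => N-(i+1)) ⊆ Finset.range N := by
        intro k hk
        obtain ⟨i, hi, rfl⟩ := Finset.mem_image.mp hk
        have := Finset.mem_range.mp hi
        exact Finset.mem_range.mpr (by omega)
      have t5 : (∑ k ∈ (Finset.range m).image (fun i => N-(i+1)), ω (θ^k)) ≤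
          ∑ k ∈ Finset.range N, ω (θ^k) :=
        Finset.sum_le_sum_of_subset_of_nonneg t4
          (fun k _ _ => hω_nonneg _ ⟨(hpow0 k).le, hpowle1 k⟩)
      have t6 : (∑ k ∈ Finset.range N, ω (θ^k)) =
          (∑ k ∈ Finset.range N₀, ω (θ^(k+1))) + ω (θ^0) := by
        have he : N = N₀ + 1 := hNdef
        rw [he]
        exact Finset.sum_range_succ' (fun k => ω (θ^k)) N₀
      have t7 := hD N₀
      rw [pow_zero] at t6
      linarith [t2, t3.le, t5]
    -- bound on V 1
    have hΨθ1 : Ψ (θ^1) ≤ C₁^p * M := by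
      obtain ⟨hj, _⟩ := JUMP p (θ^1) 1 (by rw [pow_one]; exact hcase) (hpowle1 1)
        le_rfl (by linarith) (by rw [pow_one]; linarith)
      calc Ψ (θ^1) ≤ C₁^p * Ψ 1 := hj
        _ ≤ C₁^p * M := mul_le_mul_of_nonneg_left hΨ1M hC₁p
    have hV1 : M + (∑ i ∈ Finset.range 2, Ψ (θ^i)) + Ψ (θ^1) ≤ (2 + 2*C₁^p)*M := by
      have hs2 : (∑ i ∈ Finset.range 2, Ψ (θ^i)) = Ψ (θ^0) + Ψ (θ^1) := by
        rw [Finset.sum_range_succ, Finset.sum_range_one]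
      rw [hs2, pow_zero]
      have hexp : (2+2*C₁^p)*M = M + M + 2*(C₁^p*M) := by ring
      linarith only [hΨθ1, hΨ1M, hexp]
    have hV1nn : 0 ≤ M + (∑ i ∈ Finset.range 2, Ψ (θ^i)) + Ψ (θ^1) :=
      add_nonneg (add_nonneg hM (hsum_nn _)) (hΨθ _)
    -- bound on the total sum S N
    have hSN : (∑ i ∈ Finset.range (N+1), Ψ (θ^i)) ≤ (2+2*C₁^p)*M*E := by
      have hGB := GB N₀ (by omega)
      have hsumW := WB N₀ (by omega)
      have hexple : Real.exp (2*c* ∑ i ∈ Finset.range N₀, ω (ε/θ^(i+1))) ≤ E := by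
        apply hEmono
        apply mul_le_mul_of_nonneg_left hsumW (by linarith)
      have hstep1 : (M + (∑ i ∈ Finset.range 2, Ψ (θ^i)) + Ψ (θ^1)) *
            Real.exp (2*c* ∑ i ∈ Finset.range N₀, ω (ε/θ^(i+1))) ≤
          (M + (∑ i ∈ Finset.range 2, Ψ (θ^i)) + Ψ (θ^1)) * E :=
        mul_le_mul_of_nonneg_left hexple hV1nn
      have hstep2 : (M + (∑ i ∈ Finset.range 2, Ψ (θ^i)) + Ψ (θ^1)) * E ≤
          ((2+2*C₁^p)*M)*E := mul_le_mul_of_nonneg_right hV1 hE0.le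
      have hNsum : N₀ + 2 = N + 1 := by omega
      rw [hNsum] at hGB
      have hdrop : (∑ i ∈ Finset.range (N+1), Ψ (θ^i)) ≤
          M + (∑ i ∈ Finset.range (N+1), Ψ (θ^i)) + Ψ (θ^(N₀+1)) := by
        linarith [hM, hΨθ (N₀+1)]
      calc (∑ i ∈ Finset.range (N+1), Ψ (θ^i)) ≤
          M + (∑ i ∈ Finset.range (N+1), Ψ (θ^i)) + Ψ (θ^(N₀+1)) := hdrop
        _ ≤ _ := hGB
        _ ≤ (M + (∑ i ∈ Finset.range 2, Ψ (θ^i)) + Ψ (θ^1)) * E := hstep1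
        _ ≤ ((2+2*C₁^p)*M)*E := hstep2
        _ = (2+2*C₁^p)*M*E := by ring
    -- choose a comparison scale for r
    obtain ⟨m, hmN, hrm, h2em, hfuelm⟩ : ∃ m:ℕ, m ≤ N ∧ r ≤ θ^m ∧ 2*ε ≤ θ^m ∧
        θ^m ≤ 2^(2*p)*r := by
      have hex2 : ∃ i:ℕ, θ^(i+1) < r := ⟨N, lt_of_lt_of_le hθN1 hr.1⟩
      have hi0spec : θ^(Nat.find hex2 + 1) < r := Nat.find_spec hex2
      have hi0N : Nat.find hex2 ≤ N := Nat.find_min' hex2 (lt_of_lt_of_le hθN1 hr.1)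
      have hi0ge : r ≤ θ^(Nat.find hex2) := by
        rcases Nat.eq_zero_or_pos (Nat.find hex2) with h0 | hpos
        · rw [h0, pow_zero]; exact hr.2
        · have hmin := Nat.find_min hex2 (m := Nat.find hex2 - 1) (by omega)
          have he : Nat.find hex2 - 1 + 1 = Nat.find hex2 := by omega
          rw [he] at hmin
          linarith [not_lt.mp hmin]
      have hr0 : 0 < r := lt_of_lt_of_le hε0 hr.1
      have h2p2 : (2:ℝ)^(2*p) = 2^p * 2^p := by rw [two_mul, pow_add]
      by_cases h2e : 2*ε ≤ θ^(Nat.find hex2)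
      · refine ⟨Nat.find hex2, hi0N, hi0ge, h2e, ?_⟩
        -- θ^i0 < r/θ ≤ r*2^p ≤ r*2^(2p)
        have hs : θ^(Nat.find hex2 + 1) = θ^(Nat.find hex2)*θ := pow_succ θ _
        have h1p : (1:ℝ) ≤ 2^p := one_le_pow₀ one_le_two
        have key : θ^(Nat.find hex2)*θ < r := by rw [← hs]; exact hi0spec
        rw [h2p2]
        have q1 : (0:ℝ) ≤ θ^(Nat.find hex2) := (hpow0 _).le
        have q2 : θ^(Nat.find hex2) * 1 ≤ θ^(Nat.find hex2) * (2^p*θ) :=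
          mul_le_mul_of_nonneg_left h2pθ.le q1
        have q3 : (2:ℝ)^p*(θ^(Nat.find hex2)*θ) ≤ 2^p*r :=
          mul_le_mul_of_nonneg_left key.le (by positivity)
        have q4 : (1:ℝ)*(2^p*r) ≤ 2^p*(2^p*r) :=
          mul_le_mul_of_nonneg_right h1p
            (mul_nonneg (by positivity) hr0.le)
        linarith only [q2, q3, q4]
      · push_neg at h2e
        have hi0pos : 1 ≤ Nat.find hex2 := by
          rcases Nat.eq_zero_or_pos (Nat.find hex2) with h0 | h
          · exfalso; rw [h0, pow_zero] at h2e; linarith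
          · exact h
        refine ⟨Nat.find hex2 - 1, by omega, ?_, ?_, ?_⟩
        · exact le_trans hi0ge (hpowanti _ _ (by omega))
        · -- 2ε ≤ θ^(i0-1) since θ^(i0-1)*θ = θ^i0 ≥ r ≥ ε
          have hs : θ^(Nat.find hex2 - 1)*θ = θ^(Nat.find hex2) := by
            rw [← pow_succ]; congr 1; omega
          have h4 : ε ≤ θ^(Nat.find hex2) := le_trans hr.1 hi0ge
          have hint : 0 ≤ θ^(Nat.find hex2 - 1)*(1/4 - θ) :=
            mul_nonneg (hpow0 _).le (by linarith)
          nlinarith [(hpow0 (Nat.find hex2 - 1)).le]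
        · -- θ^(i0-1)*θ*θ = θ^(i0+1) < r
          have hs : θ^(Nat.find hex2 - 1)*(θ*θ) = θ^(Nat.find hex2 + 1) := by
            have he : Nat.find hex2 + 1 = (Nat.find hex2 - 1) + 2 := by omega
            rw [he, pow_add]
            ring
          have key : θ^(Nat.find hex2 - 1)*(θ*θ) < r := by rw [hs]; exact hi0spec
          have e2 : (1:ℝ) ≤ (2^p*θ)*(2^p*θ) := by nlinarith
          have e3 : (0:ℝ) ≤ θ^(Nat.find hex2 - 1) := (hpow0 _).le
          have f1 : (2^p*(2^p:ℝ))*(θ^(Nat.find hex2 - 1)*(θ*θ)) ≤ (2^p*2^p)*r := by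
            have hpp : (0:ℝ) ≤ 2^p*2^p := by positivity
            exact mul_le_mul_of_nonneg_left key.le hpp
          have f2 : θ^(Nat.find hex2 - 1)*1 ≤
              θ^(Nat.find hex2 - 1)*((2^p*θ)*(2^p*θ)) :=
            mul_le_mul_of_nonneg_left e2 e3
          rw [h2p2]
          linarith only [f1, f2]
    -- final assembly
    obtain ⟨hΨr, hψr⟩ := JUMP (2*p) r (θ^m) hr.1 hrm (hpowle1 m) h2em hfuelm
    have hCHm := CH m hmN
    have e4 : (∑ i ∈ Finset.range m, Ψ (θ^i)) ≤ ∑ i ∈ Finset.range (N+1), Ψ (θ^i) :=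
      hsum_mono m (N+1) (by omega)
    have e5 : Ψ (θ^m) ≤ ∑ i ∈ Finset.range (N+1), Ψ (θ^i) := hterm_le m (N+1) (by omega)
    have hSnn : 0 ≤ ∑ i ∈ Finset.range (N+1), Ψ (θ^i) := hsum_nn _
    have g1 : C₁^(2*p) * Ψ (θ^m) ≤ C₁^(2*p) * ∑ i ∈ Finset.range (N+1), Ψ (θ^i) :=
      mul_le_mul_of_nonneg_left e5 (pow_nonneg hC₁0.le _)
    have g2 : ((2*p:ℕ):ℝ)*C₁^(2*p+1) * Ψ (θ^m) ≤
        ((2*p:ℕ):ℝ)*C₁^(2*p+1) * ∑ i ∈ Finset.range (N+1), Ψ (θ^i) :=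
      mul_le_mul_of_nonneg_left e5
        (mul_nonneg (Nat.cast_nonneg _) (pow_nonneg hC₁0.le _))
    have g3 : ((p:ℝ)*C₁^(p+1)) * (∑ i ∈ Finset.range m, Ψ (θ^i)) ≤
        ((p:ℝ)*C₁^(p+1)) * ∑ i ∈ Finset.range (N+1), Ψ (θ^i) :=
      mul_le_mul_of_nonneg_left e4 hC₉0
    have g4 : Cf * (∑ i ∈ Finset.range (N+1), Ψ (θ^i)) ≤ Cf * ((2+2*C₁^p)*M*E) :=
      mul_le_mul_of_nonneg_left hSN hCf0
    have hCfexp : Cf * (∑ i ∈ Finset.range (N+1), Ψ (θ^i)) =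
        C₁^(2*p) * (∑ i ∈ Finset.range (N+1), Ψ (θ^i))
        + ((2*p:ℕ):ℝ)*C₁^(2*p+1) * (∑ i ∈ Finset.range (N+1), Ψ (θ^i))
        + ((p:ℝ)*C₁^(p+1)) * (∑ i ∈ Finset.range (N+1), Ψ (θ^i)) := by
      rw [hCfdef]; ring
    have hCexp : C * M = M + (C₁^p + (p:ℝ)*C₁^(p+1))*M + Cf*((2+2*C₁^p)*M*E) := by
      rw [hCdef]; ring
    have hn7 : 0 ≤ (C₁^p + (p:ℝ)*C₁^(p+1))*M :=
      mul_nonneg (by linarith) hM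
    linarith only [hΨr, hψr, hCHm, g1, g2, g3, g4, hCfexp, hCexp, hn7, hψ1M]
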